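/- For every integer t ≥ 3, the equitable dominator chromatic number of the line graph of the double wheel graph DW_{1,t} equals 2t, i.e., χ_ed(L(DW_{1,t})) = 2t. -/
import Mathlib


open SimpleGraph

/-- `c` is an equitable dominator coloring of `G` with `n` colors: it is a proper vertex
coloring, every vertex dominates some nonempty color class (each vertex of that class lies in
its closed neighborhood), and any two color classes differ in cardinality by at most 1. -/
def IsEDColoring {V : Type*} (G : SimpleGraph V) {n : ℕ} (c : V → Fin n) : Prop :=
  (∀ ⦃u v : V⦄, G.Adj u v → c u ≠ c v) ∧
  (∀ v : V, ∃ j : Fin n, (∃ u, c u = j) ∧ ∀ u, c u = j → u = v ∨ G.Adj v u) ∧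
  (∀ i j : Fin n, {u | c u = i}.ncard ≤ {u | c u = j}.ncard + 1)

/-- The equitable dominator chromatic number of `G`: the least number of colors admitting an
equitable dominator coloring of `G`. -/
noncomputable def edcn {V : Type*} (G : SimpleGraph V) : ℕ :=
  sInf {n : ℕ | ∃ c : V → Fin n, IsEDColoring G c}
/-- The double wheel graph `DW_{1,t}`: the join of a central vertex `none` with two disjoint
cycles `C_t`, namely `some (b, i)` for `b : Bool`, `i : ZMod t`. -/
def doubleWheel (t : ℕ) : SimpleGraph (Option (Bool × ZMod t)) :=
  SimpleGraph.fromRel (fun x y =>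
    (∃ p : Bool × ZMod t, x = none ∧ y = some p) ∨
    (∃ b : Bool, ∃ i : ZMod t, x = some (b, i) ∧ y = some (b, i + 1)))

namespace DWaux

variable {t : ℕ}

/-- spoke edge -/
def sp (b : Bool) (i : ZMod t) : Sym2 (Option (Bool × ZMod t)) := s(none, some (b, i))
/-- cycle edge -/
def ce (b : Bool) (i : ZMod t) : Sym2 (Option (Bool × ZMod t)) := s(some (b, i), some (b, i + 1))

lemma zfacts (ht : 3 ≤ t) : (1 : ZMod t) ≠ 0 ∧ (2 : ZMod t) ≠ 0 ∧ (2 : ZMod t) ≠ 1 := by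
  haveI : NeZero t := ⟨by omega⟩
  have key : ∀ a b : ℕ, a < t → b < t → ((a : ZMod t) = (b : ZMod t)) → a = b := by
    intro a b ha hb h
    have := congrArg ZMod.val h
    rwa [ZMod.val_cast_of_lt ha, ZMod.val_cast_of_lt hb] at this
  refine ⟨?_, ?_, ?_⟩
  · intro h
    have := key 1 0 (by omega) (by omega) (by push_cast; exact h)
    omega
  · intro h
    have := key 2 0 (by omega) (by omega) (by push_cast; exact h)
    omega
  · intro h
    have := key 2 1 (by omega) (by omega) (by push_cast; exact h)
    omega

lemma sp_inj {b b' : Bool} {i i' : ZMod t} (h : sp b i = sp b' i') : b = b' ∧ i = i' := by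
  rw [sp, sp, Sym2.eq_iff] at h
  rcases h with ⟨-, h⟩ | ⟨h, -⟩
  · obtain ⟨h1, h2⟩ := Prod.mk.injEq .. ▸ Option.some.injEq .. ▸ h
    exact ⟨h1, h2⟩
  · exact absurd h (by simp)

lemma ce_inj (ht : 3 ≤ t) {b b' : Bool} {i i' : ZMod t} (h : ce b i = ce b' i') :
    b = b' ∧ i = i' := by
  rw [ce, ce, Sym2.eq_iff] at h
  rcases h with ⟨h1, -⟩ | ⟨h1, h2⟩
  · simpa using h1
  · simp only [Option.some.injEq, Prod.mk.injEq] at h1 h2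
    exfalso
    have h3 : i = i + 1 + 1 := by
      calc i = i' + 1 := h1.2
        _ = i + 1 + 1 := by rw [h2.2]
    have h2' : (2 : ZMod t) = 0 := by linear_combination -h3
    exact (zfacts ht).2.1 h2'

lemma sp_ne_ce {b b' : Bool} {i i' : ZMod t} : sp b i ≠ ce b' i' := by
  rw [sp, ce]
  intro h
  rw [Sym2.eq_iff] at h
  rcases h with ⟨h, -⟩ | ⟨h, -⟩ <;> simp at h

lemma sp_mem (b : Bool) (i : ZMod t) : sp b i ∈ (doubleWheel t).edgeSet := by
  rw [sp, SimpleGraph.mem_edgeSet, doubleWheel, fromRel_adj]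
  exact ⟨by simp, Or.inl (Or.inl ⟨(b, i), rfl, rfl⟩)⟩

lemma ce_mem (ht : 3 ≤ t) (b : Bool) (i : ZMod t) : ce b i ∈ (doubleWheel t).edgeSet := by
  rw [ce, SimpleGraph.mem_edgeSet, doubleWheel, fromRel_adj]
  refine ⟨?_, Or.inl (Or.inr ⟨b, i, rfl, rfl⟩)⟩
  simp only [ne_eq, Option.some.injEq, Prod.mk.injEq, not_and]
  intro _ h
  exact (zfacts ht).1 ((left_eq_add (a := i)).mp h)

lemma edge_cases {e : Sym2 (Option (Bool × ZMod t))} (he : e ∈ (doubleWheel t).edgeSet) :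
    (∃ b i, e = sp b i) ∨ (∃ b i, e = ce b i) := by
  induction e using Sym2.ind with
  | _ x y =>
    rw [SimpleGraph.mem_edgeSet, doubleWheel, fromRel_adj] at he
    rcases he with ⟨-, h | h⟩
    · rcases h with ⟨⟨b, i⟩, rfl, rfl⟩ | ⟨b, i, rfl, rfl⟩
      · exact Or.inl ⟨b, i, rfl⟩
      · exact Or.inr ⟨b, i, rfl⟩
    · rcases h with ⟨⟨b, i⟩, rfl, rfl⟩ | ⟨b, i, rfl, rfl⟩
      · exact Or.inl ⟨b, i, Sym2.eq_swap⟩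
      · exact Or.inr ⟨b, i, Sym2.eq_swap⟩

open Classical in
/-- The color (in `Bool × ZMod t`) of an edge. -/
noncomputable def col (t : ℕ) (e : Sym2 (Option (Bool × ZMod t))) : Bool × ZMod t :=
  if h : ∃ p : Bool × ZMod t, e = sp p.1 p.2 then h.choose
  else if h' : ∃ p : Bool × ZMod t, e = ce p.1 p.2 then (h'.choose.1, h'.choose.2 + 2)
  else (false, 0)

lemma col_sp (b : Bool) (i : ZMod t) : col t (sp b i) = (b, i) := by
  rw [col]
  have h : ∃ p : Bool × ZMod t, sp b i = sp p.1 p.2 := ⟨(b, i), rfl⟩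
  rw [dif_pos h]
  obtain ⟨h1, h2⟩ := sp_inj h.choose_spec
  exact Prod.ext h1.symm h2.symm

lemma col_ce (ht : 3 ≤ t) (b : Bool) (i : ZMod t) : col t (ce b i) = (b, i + 2) := by
  rw [col]
  have hn : ¬ ∃ p : Bool × ZMod t, ce b i = sp p.1 p.2 := by
    rintro ⟨p, hp⟩; exact sp_ne_ce hp.symm
  rw [dif_neg hn]
  have h : ∃ p : Bool × ZMod t, ce b i = ce p.1 p.2 := ⟨(b, i), rfl⟩
  rw [dif_pos h]
  obtain ⟨h1, h2⟩ := ce_inj ht h.choose_spec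
  rw [← h1, ← h2]

lemma class_eq (ht : 3 ≤ t) (p : Bool × ZMod t) :
    {u : (doubleWheel t).edgeSet | col t ↑u = p} =
      {⟨sp p.1 p.2, sp_mem p.1 p.2⟩, ⟨ce p.1 (p.2 - 2), ce_mem ht p.1 (p.2 - 2)⟩} := by
  ext u
  simp only [Set.mem_setOf_eq, Set.mem_insert_iff, Set.mem_singleton_iff]
  constructor
  · intro h
    rcases edge_cases u.2 with ⟨b, i, he⟩ | ⟨b, i, he⟩
    · left
      apply Subtype.ext
      rw [he, col_sp] at h
      rw [he, ← h]
    · right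
      apply Subtype.ext
      rw [he, col_ce ht] at h
      rw [he, ← h]
      simp [ce]
  · rintro (rfl | rfl)
    · simp [col_sp]
    · simp [col_ce ht]

lemma class_ncard (ht : 3 ≤ t) (p : Bool × ZMod t) :
    {u : (doubleWheel t).edgeSet | col t ↑u = p}.ncard = 2 := by
  rw [class_eq ht p]
  exact Set.ncard_pair (by
    intro h
    exact sp_ne_ce (congrArg Subtype.val h))

lemma lg_adj {e₁ e₂ : (doubleWheel t).edgeSet} (hne : (e₁ : Sym2 (Option (Bool × ZMod t))) ≠ e₂)
    {v : Option (Bool × ZMod t)} (h1 : v ∈ (e₁ : Sym2 (Option (Bool × ZMod t))))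
    (h2 : v ∈ (e₂ : Sym2 (Option (Bool × ZMod t)))) :
    (doubleWheel t).lineGraph.Adj e₁ e₂ :=
  lineGraph_adj_iff_exists.mpr ⟨fun h => hne (congrArg Subtype.val h), v, h1, h2⟩

end DWaux

theorem edcn_lineGraph_doubleWheel (t : ℕ) (ht : 3 ≤ t) :
    edcn (doubleWheel t).lineGraph = 2 * t := by
  classical
  haveI : NeZero t := ⟨by omega⟩
  obtain ⟨h1, h2, h21⟩ := DWaux.zfacts ht
  have hcard : Fintype.card (Bool × ZMod t) = 2 * t := by simp [ZMod.card]
  let eqv : (Bool × ZMod t) ≃ Fin (2 * t) := Fintype.equivFinOfCardEq hcard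
  let c : (doubleWheel t).edgeSet → Fin (2 * t) := fun e => eqv (DWaux.col t ↑e)
  have hmem : 2 * t ∈ {n : ℕ | ∃ c : (doubleWheel t).edgeSet → Fin n,
      IsEDColoring (doubleWheel t).lineGraph c} := by
    refine ⟨c, ?_, ?_, ?_⟩
    · -- proper
      intro u v huv hcc
      obtain ⟨hne, w, hw1, hw2⟩ := lineGraph_adj_iff_exists.mp huv
      have hne' : (u : Sym2 (Option (Bool × ZMod t))) ≠ v := fun h => hne (Subtype.ext h)
      have hcol : DWaux.col t ↑u = DWaux.col t ↑v := eqv.injective hcc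
      rcases DWaux.edge_cases u.2 with ⟨b, i, hu⟩ | ⟨b, i, hu⟩ <;>
        rcases DWaux.edge_cases v.2 with ⟨b', j, hv⟩ | ⟨b', j, hv⟩
      · rw [hu, hv, DWaux.col_sp, DWaux.col_sp, Prod.mk.injEq] at hcol
        obtain ⟨rfl, rfl⟩ := hcol
        exact hne' (hu ▸ hv ▸ rfl)
      · -- u spoke, v cycle edge
        rw [hu, hv, DWaux.col_sp, DWaux.col_ce ht, Prod.mk.injEq] at hcol
        obtain ⟨rfl, hij⟩ := hcol
        rw [hu] at hw1; rw [hv] at hw2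
        rw [DWaux.sp, Sym2.mem_iff] at hw1
        rw [DWaux.ce, Sym2.mem_iff] at hw2
        rcases hw1 with rfl | rfl
        · rcases hw2 with h | h <;> simp at h
        · rcases hw2 with h | h <;>
            · simp only [Option.some.injEq, Prod.mk.injEq] at h
              first
              | exact h2 (by linear_combination h.2 - hij)
              | exact h21 (by linear_combination h.2 - hij)
      · -- u cycle edge, v spoke
        rw [hu, hv, DWaux.col_ce ht, DWaux.col_sp, Prod.mk.injEq] at hcol
        obtain ⟨rfl, hij⟩ := hcol
        rw [hu] at hw1; rw [hv] at hw2
        rw [DWaux.ce, Sym2.mem_iff] at hw1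
        rw [DWaux.sp, Sym2.mem_iff] at hw2
        rcases hw2 with rfl | rfl
        · rcases hw1 with h | h <;> simp at h
        · rcases hw1 with h | h <;>
            · simp only [Option.some.injEq, Prod.mk.injEq] at h
              first
              | exact h2 (by linear_combination hij + h.2)
              | exact h21 (by linear_combination hij + h.2)
      · rw [hu, hv, DWaux.col_ce ht, DWaux.col_ce ht, Prod.mk.injEq] at hcol
        obtain ⟨rfl, hij⟩ := hcol
        have : i = j := by linear_combination hij
        subst this
        exact hne' (hu ▸ hv ▸ rfl)
    · -- domination
      intro v
      rcases DWaux.edge_cases v.2 with ⟨b, i, hv⟩ | ⟨b, i, hv⟩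
      · refine ⟨eqv (b, i + 2), ⟨⟨DWaux.sp b (i + 2), DWaux.sp_mem _ _⟩, by
          simp only [c]; rw [DWaux.col_sp]⟩, ?_⟩
        intro u hu
        have hcol : DWaux.col t ↑u = (b, i + 2) := eqv.injective hu
        right
        rcases DWaux.edge_cases u.2 with ⟨b', j, hu'⟩ | ⟨b', j, hu'⟩
        · rw [hu', DWaux.col_sp, Prod.mk.injEq] at hcol
          obtain ⟨hb, hj⟩ := hcol
          refine DWaux.lg_adj ?_ (v := none) ?_ ?_
          · rw [hv, hu']
            intro h
            exact h2 (by linear_combination -(DWaux.sp_inj h).2 - hj)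
          · rw [hv]; simp [DWaux.sp]
          · rw [hu']; simp [DWaux.sp]
        · rw [hu', DWaux.col_ce ht, Prod.mk.injEq] at hcol
          obtain ⟨hb, hj⟩ := hcol
          have hji : j = i := by linear_combination hj
          refine DWaux.lg_adj ?_ (v := some (b, i)) ?_ ?_
          · rw [hv, hu']; exact DWaux.sp_ne_ce
          · rw [hv]; simp [DWaux.sp]
          · rw [hu', hb, hji]; simp [DWaux.ce]
      · refine ⟨eqv (b, i + 1), ⟨⟨DWaux.sp b (i + 1), DWaux.sp_mem _ _⟩, by
          simp only [c]; rw [DWaux.col_sp]⟩, ?_⟩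
        intro u hu
        have hcol : DWaux.col t ↑u = (b, i + 1) := eqv.injective hu
        right
        rcases DWaux.edge_cases u.2 with ⟨b', j, hu'⟩ | ⟨b', j, hu'⟩
        · rw [hu', DWaux.col_sp, Prod.mk.injEq] at hcol
          obtain ⟨hb, hj⟩ := hcol
          refine DWaux.lg_adj ?_ (v := some (b, i + 1)) ?_ ?_
          · rw [hv, hu']
            intro h
            exact DWaux.sp_ne_ce h.symm
          · rw [hv]; simp [DWaux.ce]
          · rw [hu', hb, hj]; simp [DWaux.sp]
        · rw [hu', DWaux.col_ce ht, Prod.mk.injEq] at hcol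
          obtain ⟨hb, hj⟩ := hcol
          have hji : j + 1 = i := by linear_combination hj
          refine DWaux.lg_adj ?_ (v := some (b, i)) ?_ ?_
          · rw [hv, hu']
            intro h
            exact h1 (by linear_combination (DWaux.ce_inj ht h).2 + hji)
          · rw [hv]; simp [DWaux.ce]
          · rw [hu', hb, ← hji]; simp [DWaux.ce]
    · -- equitable
      intro i j
      have key : ∀ k : Fin (2 * t), {u | c u = k}.ncard = 2 := by
        intro k
        have hset : {u : (doubleWheel t).edgeSet | c u = k}
            = {u : (doubleWheel t).edgeSet | DWaux.col t ↑u = eqv.symm k} := by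
          ext u
          simp only [c, Set.mem_setOf_eq]
          exact ⟨fun h => by rw [← h]; exact (eqv.symm_apply_apply _).symm,
            fun h => by rw [h]; exact eqv.apply_symm_apply k⟩
        rw [hset, DWaux.class_ncard ht]
      rw [key i, key j]
      omega
  have hlb : ∀ n ∈ {n : ℕ | ∃ c : (doubleWheel t).edgeSet → Fin n,
      IsEDColoring (doubleWheel t).lineGraph c}, 2 * t ≤ n := by
    rintro n ⟨c', hproper, -, -⟩
    have hinj : Function.Injective
        (fun p : Bool × ZMod t => c' ⟨DWaux.sp p.1 p.2, DWaux.sp_mem p.1 p.2⟩) := by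
      intro p q h
      by_contra hpq
      have hadj : (doubleWheel t).lineGraph.Adj
          ⟨DWaux.sp p.1 p.2, DWaux.sp_mem p.1 p.2⟩ ⟨DWaux.sp q.1 q.2, DWaux.sp_mem q.1 q.2⟩ := by
        refine DWaux.lg_adj ?_ (v := none) ?_ ?_
        · intro hh
          obtain ⟨hb, hi⟩ := DWaux.sp_inj hh
          exact hpq (Prod.ext hb hi)
        · simp [DWaux.sp]
        · simp [DWaux.sp]
      exact hproper hadj h
    calc 2 * t = Fintype.card (Bool × ZMod t) := hcard.symm
      _ ≤ Fintype.card (Fin n) := Fintype.card_le_of_injective _ hinj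
      _ = n := Fintype.card_fin n
  rw [edcn]
  exact le_antisymm (Nat.sInf_le hmem) (le_csInf ⟨_, hmem⟩ hlb)
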